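/- Define ψ(x, μ) := x·exp(μ·√(2·ln(1+x))) for x, μ ∈ [0, ∞). Then for all x₁, x₂, μ ∈ [0, ∞): ψ(x₁ + x₂, μ) ≤ (1/2)·ψ(2, μ)·( ψ(x₁, μ) + ψ(x₂, μ) ). -/

import Mathlib

/-!
For `μ ≥ 0`, `ψ(·, μ)` is convex on `[0, ∞)` and submultiplicative, `ψ(ab, μ) ≤ ψ(a, μ) ψ(b, μ)`:
the latter because `1 + ab ≤ (1 + a)(1 + b)` and `√` is subadditive. Hence
`ψ(x₁ + x₂) ≤ (ψ(2x₁) + ψ(2x₂)) / 2 ≤ ψ(2) (ψ(x₁) + ψ(x₂)) / 2`.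
-/

/-- `ψ(x, μ) = x·exp(μ·√(2·ln(1+x)))`. -/
noncomputable def psi (x μ : ℝ) : ℝ := x * Real.exp (μ * Real.sqrt (2 * Real.log (1 + x)))

open Real Set

lemma sqrt_add_le_sqrt_add_sqrt {a b : ℝ} (ha : 0 ≤ a) (hb : 0 ≤ b) : √(a + b) ≤ √a + √b := by
  rw [sqrt_le_left (by positivity)]
  nlinarith [sq_sqrt ha, sq_sqrt hb, sqrt_nonneg a, sqrt_nonneg b]

/-- The hypothesis comes from `(x e^{μg})'' = μ e^{μg} (2g' + x g'' + μ x g'²)`. -/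
lemma convexOn_mul_exp_mul {g g' g'' : ℝ → ℝ} {μ : ℝ} (hμ : 0 ≤ μ)
    (hg : ContinuousOn g (Ici 0))
    (hg' : ∀ x, 0 < x → HasDerivAt g (g' x) x)
    (hg'' : ∀ x, 0 < x → HasDerivAt g' (g'' x) x)
    (hg''_nonneg : ∀ x, 0 < x → 0 ≤ 2 * g' x + x * g'' x) :
    ConvexOn ℝ (Ici 0) (fun x => x * exp (μ * g x)) := by
  have hexp : ∀ x, 0 < x →
      HasDerivAt (fun y => exp (μ * g y)) (exp (μ * g x) * (μ * g' x)) x :=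
    fun x hx => ((hg' x hx).const_mul μ).exp
  refine convexOn_of_hasDerivWithinAt2_nonneg (convex_Ici 0)
    (f' := fun x => exp (μ * g x) * (1 + μ * x * g' x))
    (f'' := fun x => exp (μ * g x) * μ * (2 * g' x + x * g'' x + μ * x * g' x ^ 2))
    ?_ ?_ ?_ ?_
  · exact continuousOn_id.mul (continuous_exp.comp_continuousOn (hg.const_smul μ))
  · rw [interior_Ici]
    intro x (hx : 0 < x)
    have h := (hasDerivAt_id' x).fun_mul (hexp x hx)
    exact (h.congr_deriv (by ring)).hasDerivWithinAt
  · rw [interior_Ici]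
    intro x (hx : 0 < x)
    have h := (hexp x hx).fun_mul
      ((((hasDerivAt_id' x).const_mul μ).fun_mul (hg'' x hx)).const_add 1)
    exact (h.congr_deriv (by ring)).hasDerivWithinAt
  · rw [interior_Ici]
    intro x (hx : 0 < x)
    have := hg''_nonneg x hx
    positivity

noncomputable def sqrtTwoLogOneAdd (x : ℝ) : ℝ := √(2 * log (1 + x))

lemma psi_eq_mul_exp (x μ : ℝ) : psi x μ = x * exp (μ * sqrtTwoLogOneAdd x) := rfl

lemma sqrtTwoLogOneAdd_pos {x : ℝ} (hx : 0 < x) : 0 < sqrtTwoLogOneAdd x :=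
  sqrt_pos.2 (mul_pos two_pos (log_pos (by linarith)))

lemma sqrtTwoLogOneAdd_mul_le {a b : ℝ} (ha : 0 ≤ a) (hb : 0 ≤ b) :
    sqrtTwoLogOneAdd (a * b) ≤ sqrtTwoLogOneAdd a + sqrtTwoLogOneAdd b := by
  have hlog : log (1 + a * b) ≤ log (1 + a) + log (1 + b) := by
    rw [← log_mul (by positivity) (by positivity)]
    exact log_le_log (by positivity) (by nlinarith)
  calc √(2 * log (1 + a * b)) ≤ √(2 * log (1 + a) + 2 * log (1 + b)) :=
        sqrt_le_sqrt (by linarith)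
    _ ≤ _ := sqrt_add_le_sqrt_add_sqrt (mul_nonneg zero_le_two (log_nonneg (by linarith)))
        (mul_nonneg zero_le_two (log_nonneg (by linarith)))

lemma continuousOn_sqrtTwoLogOneAdd : ContinuousOn sqrtTwoLogOneAdd (Ici 0) := by
  intro x (hx : 0 ≤ x)
  have hlog : ContinuousAt (fun y : ℝ => log (1 + y)) x :=
    (continuousAt_const.add (continuousAt_id' x)).log (by positivity : (1 : ℝ) + x ≠ 0)
  exact (continuous_sqrt.continuousAt.comp (hlog.const_mul 2)).continuousWithinAt

lemma hasDerivAt_sqrtTwoLogOneAdd {x : ℝ} (hx : 0 < x) :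
    HasDerivAt sqrtTwoLogOneAdd ((1 + x) * sqrtTwoLogOneAdd x)⁻¹ x := by
  have hlog : HasDerivAt (fun y => 2 * log (1 + y)) (2 * (1 + x)⁻¹) x :=
    (((hasDerivAt_id' x).const_add 1).log (by positivity)).const_mul 2 |>.congr_deriv (by ring)
  have hs := (sqrtTwoLogOneAdd_pos hx).ne'
  exact (hlog.sqrt (mul_pos two_pos (log_pos (by linarith))).ne').congr_deriv
    (by unfold sqrtTwoLogOneAdd at hs ⊢; field_simp)

lemma hasDerivAt_inv_mul_sqrtTwoLogOneAdd {x : ℝ} (hx : 0 < x) :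
    HasDerivAt (fun y => ((1 + y) * sqrtTwoLogOneAdd y)⁻¹)
      (-(sqrtTwoLogOneAdd x + (1 + x) * ((1 + x) * sqrtTwoLogOneAdd x)⁻¹) /
        ((1 + x) * sqrtTwoLogOneAdd x) ^ 2) x := by
  have hs := sqrtTwoLogOneAdd_pos hx
  exact ((((hasDerivAt_id' x).const_add 1).fun_mul
    (hasDerivAt_sqrtTwoLogOneAdd hx)).fun_inv (by positivity)).congr_deriv (by ring)

lemma psi_mul_le {a b μ : ℝ} (ha : 0 ≤ a) (hb : 0 ≤ b) (hμ : 0 ≤ μ) :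
    psi (a * b) μ ≤ psi a μ * psi b μ := by
  calc psi (a * b) μ ≤ a * b * exp (μ * (sqrtTwoLogOneAdd a + sqrtTwoLogOneAdd b)) := by
        rw [psi_eq_mul_exp]
        gcongr
        exact sqrtTwoLogOneAdd_mul_le ha hb
    _ = psi a μ * psi b μ := by rw [psi_eq_mul_exp, psi_eq_mul_exp, mul_add, exp_add]; ring

lemma psi_convexOn {μ : ℝ} (hμ : 0 ≤ μ) : ConvexOn ℝ (Ici 0) (psi · μ) := by
  simp only [psi_eq_mul_exp]
  refine convexOn_mul_exp_mul hμ continuousOn_sqrtTwoLogOneAdd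
    (fun x hx => hasDerivAt_sqrtTwoLogOneAdd hx)
    (fun x hx => hasDerivAt_inv_mul_sqrtTwoLogOneAdd hx) fun x hx => ?_
  set s := sqrtTwoLogOneAdd x
  have hs : 0 < s := sqrtTwoLogOneAdd_pos hx
  have hs2 : s ^ 2 = 2 * log (1 + x) := sq_sqrt (mul_pos two_pos (log_pos (by linarith))).le
  have hlog := le_log_one_add_of_nonneg hx.le
  rw [div_le_iff₀ (by positivity)] at hlog
  have key : x ≤ (2 + x) * s ^ 2 := by nlinarith
  rw [show 2 * ((1 + x) * s)⁻¹ + x * (-(s + (1 + x) * ((1 + x) * s)⁻¹) / ((1 + x) * s) ^ 2) =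
      ((2 + x) * s ^ 2 - x) / ((1 + x) ^ 2 * s ^ 3) by field_simp; ring]
  exact div_nonneg (by linarith) (by positivity)

/-- Lemma 2.6, part (iv): for all `x₁, x₂, μ ≥ 0`,
`ψ(x₁ + x₂, μ) ≤ (1/2)·ψ(2, μ)·(ψ(x₁, μ) + ψ(x₂, μ))`. -/
theorem stmt_6 (x₁ x₂ μ : ℝ) (hx₁ : 0 ≤ x₁) (hx₂ : 0 ≤ x₂) (hμ : 0 ≤ μ) :
    psi (x₁ + x₂) μ ≤ 1 / 2 * psi 2 μ * (psi x₁ μ + psi x₂ μ) := by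
  have h₁ := psi_mul_le zero_le_two hx₁ hμ
  have h₂ := psi_mul_le zero_le_two hx₂ hμ
  calc psi (x₁ + x₂) μ = psi ((1 / 2 : ℝ) • (2 * x₁) + (1 / 2 : ℝ) • (2 * x₂)) μ := by
        simp only [smul_eq_mul]; ring_nf
    _ ≤ (1 / 2 : ℝ) • psi (2 * x₁) μ + (1 / 2 : ℝ) • psi (2 * x₂) μ :=
        (psi_convexOn hμ).2 (mem_Ici.2 (by positivity)) (mem_Ici.2 (by positivity))
          (by norm_num) (by norm_num) (by norm_num)
    _ ≤ 1 / 2 * psi 2 μ * (psi x₁ μ + psi x₂ μ) := by simp only [smul_eq_mul]; linarith
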